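/- Second formula for B: with A defined by Keel's recursion and B := (1−x)/(A^{(x−1)/2} − x) ∈ ℚ(x)[[t]], one has B = (A^{(x+1)/2} + xA)/(1 + x + xt). -/

import Mathlib

open PowerSeries

noncomputable section

abbrev K : Type := RatFunc ℚ

/-- `x`, the variable of the coefficient field `ℚ(x)`. -/
abbrev x : K := RatFunc.X

/-- Formal exponential `exp S = ∑ Sⁿ/n!` of a power series (intended for `S` with zero
constant term, in which case the coefficientwise formula below is the usual one). -/
def psExp (S : PowerSeries K) : PowerSeries K :=
  PowerSeries.mk fun m =>
    ∑ n ∈ Finset.range (m + 1), (n.factorial : K)⁻¹ * PowerSeries.coeff m (S ^ n)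

/-- Formal logarithm `log P = ∑_{n≥1} (−1)^{n+1} (P−1)ⁿ/n` of a power series (intended for
`P` with constant term `1`). -/
def psLog (P : PowerSeries K) : PowerSeries K :=
  PowerSeries.mk fun m =>
    ∑ n ∈ Finset.Icc 1 m, (-1 : K) ^ (n + 1) * (n : K)⁻¹ * PowerSeries.coeff m ((P - 1) ^ n)

/-- Formal power `P^a := exp(a · log P)` for `a ∈ ℚ(x)`, for `P` with constant term `1`. -/
def psPow (a : K) (P : PowerSeries K) : PowerSeries K :=
  psExp (PowerSeries.C a * psLog P)

end

noncomputable section Aux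

open PowerSeries Finset

instance : CharZero K := by
  refine ⟨fun m n h => ?_⟩
  have h2 : (algebraMap (Polynomial ℚ) (RatFunc ℚ)) (m : Polynomial ℚ) =
      (algebraMap (Polynomial ℚ) (RatFunc ℚ)) (n : Polynomial ℚ) := by
    rw [map_natCast, map_natCast]; exact_mod_cast h
  exact_mod_cast RatFunc.algebraMap_injective ℚ h2

/-- Truncated exponential sum. -/
def expPart (S : PowerSeries K) (M : ℕ) : PowerSeries K :=
  ∑ k ∈ Finset.range (M + 1), PowerSeries.C ((k.factorial : K)⁻¹) * S ^ k

/-- Truncated logarithm sum. -/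
def logPart (P : PowerSeries K) (M : ℕ) : PowerSeries K :=
  ∑ k ∈ Finset.range (M + 1), PowerSeries.C ((-1 : K) ^ (k + 1) * (k : K)⁻¹) * (P - 1) ^ k

/-- Truncated geometric sum. -/
def geomPart (P : PowerSeries K) (M : ℕ) : PowerSeries K :=
  ∑ k ∈ Finset.range (M + 1), PowerSeries.C ((-1 : K) ^ k) * (P - 1) ^ k

lemma coeff_pow_eq_zero' {S : PowerSeries K} (hS : constantCoeff S = 0)
    {n k : ℕ} (h : n < k) : coeff n (S ^ k) = 0 := by
  have hd : (X : PowerSeries K) ^ k ∣ S ^ k := pow_dvd_pow_of_dvd (X_dvd_iff.mpr hS) k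
  exact X_pow_dvd_iff.mp hd n h

lemma coeff_mul_congr (P U V : PowerSeries K) (m : ℕ)
    (h : ∀ k ≤ m, coeff k U = coeff k V) :
    coeff m (P * U) = coeff m (P * V) := by
  rw [coeff_mul, coeff_mul]
  refine Finset.sum_congr rfl fun p hp => ?_
  rw [Finset.HasAntidiagonal.mem_antidiagonal] at hp
  rw [h p.2 (by omega)]

lemma coeff_psExp (S : PowerSeries K) (hS : constantCoeff S = 0) {n M : ℕ} (h : n ≤ M) :
    coeff n (psExp S) = coeff n (expPart S M) := by
  rw [psExp, coeff_mk, expPart, map_sum]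
  simp only [coeff_C_mul]
  apply Finset.sum_subset
  · intro k hk
    simp only [Finset.mem_range] at *
    omega
  · intro k hk hk'
    simp only [Finset.mem_range] at hk hk'
    rw [coeff_pow_eq_zero' hS (by omega), mul_zero]

lemma coeff_psLog (P : PowerSeries K) (hP : constantCoeff P = 1) {n M : ℕ} (h : n ≤ M) :
    coeff n (psLog P) = coeff n (logPart P M) := by
  have hQ : constantCoeff (P - 1) = 0 := by simp [hP]
  rw [psLog, coeff_mk, logPart, map_sum]
  simp only [coeff_C_mul]
  apply Finset.sum_subset
  · intro k hk
    simp only [Finset.mem_Icc, Finset.mem_range] at *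
    omega
  · intro k hk hk'
    simp only [Finset.mem_Icc, Finset.mem_range] at hk hk'
    rcases Nat.eq_zero_or_pos k with hk0 | hk0
    · subst hk0; simp
    · rw [coeff_pow_eq_zero' hQ (by omega), mul_zero]

lemma constantCoeff_psLog (P : PowerSeries K) : constantCoeff (psLog P) = 0 := by
  rw [← coeff_zero_eq_constantCoeff_apply, psLog, coeff_mk]
  simp

lemma coeff_zero_psExp (S : PowerSeries K) : coeff 0 (psExp S) = 1 := by
  rw [psExp, coeff_mk]
  simp

lemma fact_cast_ne_zero (k : ℕ) : (k.factorial : K) ≠ 0 :=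
  Nat.cast_ne_zero.mpr (Nat.factorial_ne_zero k)

lemma D_C_mul_pow (c : K) (Q : PowerSeries K) (k : ℕ) :
    d⁄dX K (PowerSeries.C c * Q ^ (k + 1)) =
      PowerSeries.C (c * ((k + 1 : ℕ) : K)) * (Q ^ k * d⁄dX K Q) := by
  rw [Derivation.leibniz, Derivation.leibniz_pow, derivative_C, map_mul, map_natCast]
  simp only [smul_eq_mul, nsmul_eq_mul, smul_zero, add_zero, Nat.add_sub_cancel,
    mul_zero]
  push_cast
  ring

lemma D_expPart (S : PowerSeries K) (M : ℕ) :
    d⁄dX K (expPart S (M + 1)) = d⁄dX K S * expPart S M := by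
  rw [expPart, map_sum, Finset.sum_range_succ']
  have h0 : d⁄dX K (PowerSeries.C ((Nat.factorial 0 : K)⁻¹) * S ^ 0) = 0 := by
    simp
  rw [h0, add_zero, expPart, Finset.mul_sum]
  refine Finset.sum_congr rfl fun j hj => ?_
  rw [D_C_mul_pow]
  have hj1 : ((j + 1 : ℕ) : K) ≠ 0 := Nat.cast_ne_zero.mpr (Nat.succ_ne_zero j)
  have h1 : ((j + 1).factorial : K)⁻¹ * ((j + 1 : ℕ) : K) = (j.factorial : K)⁻¹ := by
    rw [Nat.factorial_succ]
    have hf := fact_cast_ne_zero j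
    push_cast
    push_cast at hj1
    field_simp
  rw [h1]
  ring

lemma D_logPart (P : PowerSeries K) (M : ℕ) :
    d⁄dX K (logPart P (M + 1)) = d⁄dX K P * geomPart P M := by
  rw [logPart, map_sum, Finset.sum_range_succ']
  have h0 : d⁄dX K (PowerSeries.C ((-1 : K) ^ (0 + 1) * (((0 : ℕ)) : K)⁻¹) * (P - 1) ^ 0) = 0 := by
    simp
  rw [h0, add_zero, geomPart, Finset.mul_sum]
  refine Finset.sum_congr rfl fun j hj => ?_
  rw [D_C_mul_pow]
  have hj1 : ((j + 1 : ℕ) : K) ≠ 0 := Nat.cast_ne_zero.mpr (Nat.succ_ne_zero j)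
  have h1 : (-1 : K) ^ (j + 1 + 1) * ((j + 1 : ℕ) : K)⁻¹ * ((j + 1 : ℕ) : K) = (-1 : K) ^ j := by
    rw [mul_assoc, inv_mul_cancel₀ hj1, mul_one, pow_succ, pow_succ]
    ring
  rw [h1]
  have h2 : d⁄dX K (P - 1) = d⁄dX K P := by
    rw [map_sub, Derivation.map_one_eq_zero, sub_zero]
  rw [h2]
  ring

lemma mul_geomPart (P : PowerSeries K) (M : ℕ) :
    P * geomPart P M = 1 + PowerSeries.C ((-1 : K) ^ M) * (P - 1) ^ (M + 1) := by
  induction M with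
  | zero =>
    rw [geomPart, Finset.sum_range_one]
    simp only [pow_zero, map_one, one_mul, mul_one, pow_one]
    ring
  | succ M ih =>
    rw [geomPart, Finset.sum_range_succ, mul_add, ← geomPart, ih]
    simp only [map_pow, map_neg, map_one]
    ring

lemma P_mul_D_psLog (P : PowerSeries K) (hP : constantCoeff P = 1) :
    P * d⁄dX K (psLog P) = d⁄dX K P := by
  have hQ : constantCoeff (P - 1) = 0 := by simp [hP]
  ext m
  have hagree : ∀ k ≤ m, coeff k (d⁄dX K (psLog P)) = coeff k (d⁄dX K P * geomPart P m) := by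
    intro k hk
    rw [coeff_derivative, coeff_psLog P hP (show k + 1 ≤ m + 1 by omega), ← coeff_derivative,
      D_logPart]
  rw [coeff_mul_congr _ _ _ m hagree]
  have hcomm : P * (d⁄dX K P * geomPart P m) = d⁄dX K P * (P * geomPart P m) := by ring
  rw [hcomm, mul_geomPart, mul_add, mul_one, map_add]
  have hz : coeff m (d⁄dX K P * (PowerSeries.C ((-1 : K) ^ m) * (P - 1) ^ (m + 1))) = 0 := by
    have hd : (X : PowerSeries K) ^ (m + 1) ∣
        d⁄dX K P * (PowerSeries.C ((-1 : K) ^ m) * (P - 1) ^ (m + 1)) :=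
      Dvd.dvd.mul_left (Dvd.dvd.mul_left
        (pow_dvd_pow_of_dvd (X_dvd_iff.mpr hQ) (m + 1)) _) _
    exact X_pow_dvd_iff.mp hd m (by omega)
  rw [hz, add_zero]

lemma ode_unique (w F G : PowerSeries K) (hF : d⁄dX K F = w * F) (hG : d⁄dX K G = w * G)
    (h0 : coeff 0 F = coeff 0 G) : F = G := by
  have key : ∀ n, ∀ k ≤ n, coeff k F = coeff k G := by
    intro n
    induction n with
    | zero =>
      intro k hk
      interval_cases k
      exact h0
    | succ m ih =>
      intro k hk
      rcases eq_or_lt_of_le hk with h | h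
      case inr => exact ih k (by omega)
      case inl =>
        subst h
        have h1 : coeff m (d⁄dX K F) = coeff m (d⁄dX K G) := by
          rw [hF, hG, coeff_mul, coeff_mul]
          refine Finset.sum_congr rfl fun p hp => ?_
          rw [Finset.HasAntidiagonal.mem_antidiagonal] at hp
          rw [ih p.2 (by omega)]
        rw [coeff_derivative, coeff_derivative] at h1
        have hm : ((m : K) + 1) ≠ 0 := by
          have h2 : ((m + 1 : ℕ) : K) ≠ 0 := Nat.cast_ne_zero.mpr (Nat.succ_ne_zero m)
          push_cast at h2
          exact h2
        exact mul_right_cancel₀ hm h1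
  ext n
  exact key n n le_rfl

lemma D_psExp (S : PowerSeries K) (hS : constantCoeff S = 0) :
    d⁄dX K (psExp S) = d⁄dX K S * psExp S := by
  ext m
  rw [coeff_derivative, coeff_psExp S hS (le_refl (m + 1)), ← coeff_derivative, D_expPart]
  exact coeff_mul_congr (d⁄dX K S) (expPart S m) (psExp S) m fun k hk =>
    (coeff_psExp S hS hk).symm

lemma D_psPow (c : K) (P : PowerSeries K) :
    d⁄dX K (psPow c P) = PowerSeries.C c * d⁄dX K (psLog P) * psPow c P := by
  rw [psPow, D_psExp _ (by simp [constantCoeff_psLog])]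
  congr 1
  rw [Derivation.leibniz, derivative_C]
  simp [smul_eq_mul, mul_comm]

lemma coeff_zero_psPow (c : K) (P : PowerSeries K) : coeff 0 (psPow c P) = 1 :=
  coeff_zero_psExp _

end Aux


section Keel

open PowerSeries Finset

lemma fact_succ_cast (k : ℕ) : ((k + 1).factorial : K) = ((k : K) + 1) * (k.factorial : K) := by
  rw [Nat.factorial_succ]
  push_cast
  ring

lemma keel_ode (a : ℕ → K) (ha0 : a 0 = 1) (ha1 : a 1 = 1)
    (ha : ∀ n : ℕ, 2 ≤ n → a n = a (n - 1) +
      x * ∑ j ∈ Finset.Icc 2 (n - 1), ((n - 1).choose j : K) * a j * a (n - j))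
    (A : PowerSeries K) (hA : A = PowerSeries.mk fun n => (n.factorial : K)⁻¹ * a n) :
    A + PowerSeries.C x * A * d⁄dX K A =
      (PowerSeries.C (1 + x) + PowerSeries.C x * X) * d⁄dX K A := by
  have hcA : ∀ k, coeff k A = (k.factorial : K)⁻¹ * a k := by
    intro k; rw [hA, coeff_mk]
  have hcDA : ∀ k, coeff k (d⁄dX K A) = (k.factorial : K)⁻¹ * a (k + 1) := by
    intro k
    rw [coeff_derivative, hcA, fact_succ_cast]
    have h1 : ((k : K) + 1) ≠ 0 := by
      have := Nat.cast_ne_zero (R := K).mpr (Nat.succ_ne_zero k)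
      push_cast at this
      exact this
    have h2 := fact_cast_ne_zero k
    field_simp
  have hL : A + PowerSeries.C x * A * d⁄dX K A =
      A + PowerSeries.C x * (A * d⁄dX K A) := by ring
  have hR : (PowerSeries.C (1 + x) + PowerSeries.C x * X) * d⁄dX K A =
      PowerSeries.C (1 + x) * d⁄dX K A + PowerSeries.C x * (X * d⁄dX K A) := by ring
  rw [hL, hR]
  ext n
  rw [map_add, map_add, coeff_C_mul, coeff_C_mul, coeff_C_mul, hcA, hcDA]
  rcases n with _ | m
  · -- constant coefficient
    have hADA : coeff 0 (A * d⁄dX K A) = 1 := by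
      rw [coeff_mul]
      simp [hcA, hcDA, ha0, ha1]
    have hXDA : coeff 0 (X * d⁄dX K A) = 0 := by
      rw [coeff_mul]
      simp
    rw [hADA, hXDA, ha0, ha1]
    simp
  · -- coefficient of t^(m+1)
    have hXDA : coeff (m + 1) (X * d⁄dX K A) = (m.factorial : K)⁻¹ * a (m + 1) := by
      rw [coeff_succ_X_mul, hcDA]
    have hADA : coeff (m + 1) (A * d⁄dX K A) =
        ((m + 1).factorial : K)⁻¹ *
          ∑ k ∈ Finset.range (m + 2), ((m + 1).choose k : K) * a k * a (m + 2 - k) := by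
      rw [coeff_mul, Finset.Nat.sum_antidiagonal_eq_sum_range_succ_mk, Finset.mul_sum]
      refine Finset.sum_congr rfl fun k hk => ?_
      rw [Finset.mem_range] at hk
      have hk' : k ≤ m + 1 := by omega
      rw [hcA, hcDA]
      have h1 : m + 1 - k + 1 = m + 2 - k := by omega
      rw [h1, Nat.cast_choose K hk']
      have h2 := fact_cast_ne_zero k
      have h3 := fact_cast_ne_zero (m + 1 - k)
      have h4 := fact_cast_ne_zero (m + 1)
      field_simp
    have hsplit : ∑ k ∈ Finset.range (m + 2), ((m + 1).choose k : K) * a k * a (m + 2 - k) =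
        a (m + 2) + ((m : K) + 1) * a (m + 1) +
          ∑ j ∈ Finset.Icc 2 (m + 1), ((m + 1).choose j : K) * a j * a (m + 2 - j) := by
      rw [Finset.sum_range_succ', Finset.sum_range_succ']
      have hIcc : ∑ j ∈ Finset.Icc 2 (m + 1), ((m + 1).choose j : K) * a j * a (m + 2 - j) =
          ∑ i ∈ Finset.range m, ((m + 1).choose (2 + i) : K) * a (2 + i) * a (m + 2 - (2 + i)) := by
        rw [← Finset.Ico_add_one_right_eq_Icc, Finset.sum_Ico_eq_sum_range]
        have he : m + 1 + 1 - 2 = m := by omega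
        rw [he]
      rw [hIcc]
      have h0 : ((m + 1).choose 0 : K) * a 0 * a (m + 2 - 0) = a (m + 2) := by
        simp [ha0]
      have h1 : ((m + 1).choose (0 + 1) : K) * a (0 + 1) * a (m + 2 - (0 + 1)) =
          ((m : K) + 1) * a (m + 1) := by
        push_cast [ha1, Nat.choose_one_right]
        ring
      rw [h0, h1]
      have hsum : ∀ i ∈ Finset.range m,
          ((m + 1).choose (i + 1 + 1) : K) * a (i + 1 + 1) * a (m + 2 - (i + 1 + 1)) =
          ((m + 1).choose (2 + i) : K) * a (2 + i) * a (m + 2 - (2 + i)) := by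
        intro i hi
        have e1 : i + 1 + 1 = 2 + i := by omega
        rw [e1]
      rw [Finset.sum_congr rfl hsum]
      ring
    have hrec := ha (m + 2) (by omega)
    have hrec' : a (m + 2) = a (m + 1) +
        x * ∑ j ∈ Finset.Icc 2 (m + 1), ((m + 1).choose j : K) * a j * a (m + 2 - j) := by
      simpa using hrec
    rw [hADA, hsplit, hXDA]
    have h4 := fact_cast_ne_zero (m + 1)
    have h5 := fact_cast_ne_zero m
    have h6 : ((m : K) + 1) ≠ 0 := by
      have := Nat.cast_ne_zero (R := K).mpr (Nat.succ_ne_zero m)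
      push_cast at this
      exact this
    rw [fact_succ_cast, mul_inv]
    have hinv : ((m : K) + 1)⁻¹ * ((m : K) + 1) = 1 := inv_mul_cancel₀ h6
    linear_combination (-(((m : K) + 1)⁻¹ * (m.factorial : K)⁻¹)) * hrec' +
      (x * (m.factorial : K)⁻¹ * a (m + 1)) * hinv

end Keel

/-- Second formula for `B`: `B = (A^((x+1)/2) + xA)/(1 + x + xt)`. -/
theorem second_formula_for_B
    (a : ℕ → K) (ha0 : a 0 = 1) (ha1 : a 1 = 1)
    (ha : ∀ n : ℕ, 2 ≤ n → a n = a (n - 1) +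
      x * ∑ j ∈ Finset.Icc 2 (n - 1), ((n - 1).choose j : K) * a j * a (n - j))
    (A : PowerSeries K) (hA : A = PowerSeries.mk fun n => (n.factorial : K)⁻¹ * a n)
    (B : PowerSeries K)
    (hB : B = PowerSeries.C (1 - x) * (psPow ((x - 1) / 2) A - PowerSeries.C x)⁻¹) :
    B = (psPow ((x + 1) / 2) A + PowerSeries.C x * A) *
      (PowerSeries.C (1 + x) + PowerSeries.C x * PowerSeries.X)⁻¹ := by
  have hc0mul : ∀ U V : PowerSeries K, coeff 0 (U * V) = coeff 0 U * coeff 0 V := by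
    intro U V
    simp only [coeff_zero_eq_constantCoeff]
    exact map_mul _ _ _
  have hA1 : constantCoeff A = 1 := by
    rw [hA, ← coeff_zero_eq_constantCoeff_apply, coeff_mk]
    simp [ha0]
  have hA0 : coeff 0 A = 1 := by rw [coeff_zero_eq_constantCoeff_apply, hA1]
  have hAne : A ≠ 0 := by
    intro h
    rw [h, map_zero] at hA1
    exact zero_ne_one hA1
  have hDL : A * d⁄dX K (psLog A) = d⁄dX K A := P_mul_D_psLog A hA1
  -- `psPow 1 A = A`
  have hpow1 : psPow 1 A = A := by
    apply ode_unique (d⁄dX K (psLog A))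
    · rw [D_psPow, map_one, one_mul]
    · rw [← hDL]; ring
    · rw [coeff_zero_psPow, hA0]
  -- additivity of `psPow`
  have hpow_add : ∀ c d : K, psPow c A * psPow d A = psPow (c + d) A := by
    intro c d
    apply ode_unique (PowerSeries.C (c + d) * d⁄dX K (psLog A))
    · rw [Derivation.leibniz, D_psPow, D_psPow]
      simp only [smul_eq_mul, map_add]
      ring
    · rw [D_psPow]
    · rw [coeff_zero_psPow, hc0mul, coeff_zero_psPow, coeff_zero_psPow, one_mul]
  -- Manin's equation
  have hKeel := keel_ode a ha0 ha1 ha A hA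
  have hManin : psPow x A = PowerSeries.C (1 - x ^ 2) +
      PowerSeries.C ((1 - x) * x) * PowerSeries.X + PowerSeries.C (x ^ 2) * A := by
    apply ode_unique (PowerSeries.C x * d⁄dX K (psLog A))
    · rw [D_psPow]
    · have hDG : d⁄dX K (PowerSeries.C (1 - x ^ 2) +
          PowerSeries.C ((1 - x) * x) * PowerSeries.X + PowerSeries.C (x ^ 2) * A) =
          PowerSeries.C ((1 - x) * x) + PowerSeries.C (x ^ 2) * d⁄dX K A := by
        rw [map_add, map_add, derivative_C, Derivation.leibniz, Derivation.leibniz,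
          derivative_C, derivative_C, derivative_X]
        simp only [smul_eq_mul, mul_one, mul_zero, add_zero, zero_add]
      have hmul : A * d⁄dX K (PowerSeries.C (1 - x ^ 2) +
          PowerSeries.C ((1 - x) * x) * PowerSeries.X + PowerSeries.C (x ^ 2) * A) =
          A * (PowerSeries.C x * d⁄dX K (psLog A) *
            (PowerSeries.C (1 - x ^ 2) +
              PowerSeries.C ((1 - x) * x) * PowerSeries.X + PowerSeries.C (x ^ 2) * A)) := by
        have h2 : A * (PowerSeries.C x * d⁄dX K (psLog A) *
            (PowerSeries.C (1 - x ^ 2) +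
              PowerSeries.C ((1 - x) * x) * PowerSeries.X + PowerSeries.C (x ^ 2) * A)) =
            PowerSeries.C x * (A * d⁄dX K (psLog A)) *
            (PowerSeries.C (1 - x ^ 2) +
              PowerSeries.C ((1 - x) * x) * PowerSeries.X + PowerSeries.C (x ^ 2) * A) := by
          ring
        rw [h2, hDL, hDG]
        simp only [map_sub, map_add, map_mul, map_pow, map_one] at hKeel ⊢
        linear_combination (PowerSeries.C x - (PowerSeries.C x) ^ 2) * hKeel
      exact mul_left_cancel₀ hAne hmul
    · rw [coeff_zero_psPow, map_add, map_add]
      simp only [hc0mul, coeff_zero_C, hA0]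
      simp only [coeff_zero_eq_constantCoeff_apply, constantCoeff_X, mul_zero, mul_one]
      ring
  -- nonvanishing of scalars
  have hpoly : ∀ p : Polynomial ℚ, p ≠ 0 → algebraMap (Polynomial ℚ) (RatFunc ℚ) p ≠ 0 := by
    intro p hp h
    exact hp ((map_eq_zero_iff _ (RatFunc.algebraMap_injective ℚ)).mp h)
  have hx1 : (1 : K) - x ≠ 0 := by
    have he : (1 : K) - x = algebraMap (Polynomial ℚ) (RatFunc ℚ) (1 - Polynomial.X) := by
      rw [map_sub, map_one, RatFunc.algebraMap_X]
    rw [he]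
    apply hpoly
    intro h
    have h0 := congrArg (Polynomial.eval 0) h
    simp at h0
  have hx2 : (1 : K) + x ≠ 0 := by
    have he : (1 : K) + x = algebraMap (Polynomial ℚ) (RatFunc ℚ) (1 + Polynomial.X) := by
      rw [map_add, map_one, RatFunc.algebraMap_X]
    rw [he]
    apply hpoly
    intro h
    have h0 := congrArg (Polynomial.eval 0) h
    simp at h0
  -- combination of the power identities
  have h12 : psPow ((x - 1) / 2) A * psPow ((x + 1) / 2) A = psPow x A := by
    rw [hpow_add]
    ring_nf
  have h2 : psPow ((x - 1) / 2) A * A = psPow ((x + 1) / 2) A := by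
    have h' := hpow_add ((x - 1) / 2) 1
    rw [hpow1] at h'
    rw [h']
    ring_nf
  have key : (psPow ((x - 1) / 2) A - PowerSeries.C x) *
      (psPow ((x + 1) / 2) A + PowerSeries.C x * A) =
      PowerSeries.C (1 - x) *
        (PowerSeries.C (1 + x) + PowerSeries.C x * PowerSeries.X) := by
    have e1 : (psPow ((x - 1) / 2) A - PowerSeries.C x) *
        (psPow ((x + 1) / 2) A + PowerSeries.C x * A) =
        psPow ((x - 1) / 2) A * psPow ((x + 1) / 2) A +
          PowerSeries.C x * (psPow ((x - 1) / 2) A * A) -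
          PowerSeries.C x * psPow ((x + 1) / 2) A -
          PowerSeries.C x * PowerSeries.C x * A := by ring
    rw [e1, h12, h2, hManin]
    simp only [map_sub, map_add, map_mul, map_pow, map_one]
    ring
  -- invertibility and conclusion
  have hc1 : constantCoeff (psPow ((x - 1) / 2) A - PowerSeries.C x) ≠ 0 := by
    rw [map_sub, constantCoeff_C, ← coeff_zero_eq_constantCoeff_apply, coeff_zero_psPow]
    exact hx1
  have hc2 : constantCoeff
      (PowerSeries.C (1 + x) + PowerSeries.C x * PowerSeries.X) ≠ 0 := by
    rw [map_add, constantCoeff_C, map_mul, constantCoeff_C, constantCoeff_X, mul_zero, add_zero]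
    exact hx2
  rw [hB, PowerSeries.eq_mul_inv_iff_mul_eq hc2]
  have hinv : (psPow ((x - 1) / 2) A - PowerSeries.C x)⁻¹ *
      (psPow ((x - 1) / 2) A - PowerSeries.C x) = 1 :=
    PowerSeries.inv_mul_cancel _ hc1
  have hfin : psPow ((x + 1) / 2) A + PowerSeries.C x * A =
      (psPow ((x - 1) / 2) A - PowerSeries.C x)⁻¹ *
        (PowerSeries.C (1 - x) *
          (PowerSeries.C (1 + x) + PowerSeries.C x * PowerSeries.X)) := by
    rw [← key, ← mul_assoc, hinv, one_mul]
  rw [hfin]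
  ring
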